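/- Let 𝔊₄⁰⁰ be the 7-dimensional real Lie algebra with basis (X₁,X₂,X₃,X₄,X₅,X,Y) and nonzero brackets [X₁,X₂]=X₄, [X₁,X₃]=X₅, [X,X₁]=X₁, [X,X₄]=X₄, [X,X₅]=X₅, [Y,X₂]=X₂, [Y,X₄]=X₄. For F ∈ (𝔊₄⁰⁰)* with coordinates (α₁,α₂,α₃,α₄,α₅,α,β) in the dual basis, let B_F be the skew-symmetric bilinear form on 𝔊₄⁰⁰ defined by B_F(A,B) = ⟨F,[A,B]⟩. Then the rank of B_F equals 6 if and only if α₅ ≠ 0 and (α₂ ≠ 0 or α₄ ≠ 0); in particular the maximal possible rank of B_F over all F is 6. -/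
import Mathlib


noncomputable section

open Matrix

/-- Half of the structure constants of the Lie algebra 𝔊₄⁰⁰: `g4half i j` is the
coordinate vector of `[Xᵢ, Xⱼ]` for the ordered pairs `(i,j)` listed in the paper
(indices `0,…,4` are `X₁,…,X₅`, index `5` is `X`, index `6` is `Y`). -/
def g4half (i j : Fin 7) : Fin 7 → ℝ :=
  if i = 0 ∧ j = 1 then Pi.single 3 1      -- [X₁,X₂] = X₄
  else if i = 0 ∧ j = 2 then Pi.single 4 1 -- [X₁,X₃] = X₅
  else if i = 5 ∧ j = 0 then Pi.single 0 1 -- [X,X₁] = X₁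
  else if i = 5 ∧ j = 3 then Pi.single 3 1 -- [X,X₄] = X₄
  else if i = 5 ∧ j = 4 then Pi.single 4 1 -- [X,X₅] = X₅
  else if i = 6 ∧ j = 1 then Pi.single 1 1 -- [Y,X₂] = X₂
  else if i = 6 ∧ j = 3 then Pi.single 3 1 -- [Y,X₄] = X₄
  else 0

/-- The bracket `[Xᵢ, Xⱼ]` (in coordinates) of basis vectors of 𝔊₄⁰⁰. -/
def g4br (i j : Fin 7) : Fin 7 → ℝ := g4half i j - g4half j i

/-- The Gram matrix of the bilinear form `B_F(A,B) = ⟨F,[A,B]⟩` in the given basis,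
where `α` is the coordinate vector of `F` in the dual basis. -/
def gramG4 (α : Fin 7 → ℝ) : Matrix (Fin 7) (Fin 7) ℝ :=
  Matrix.of fun i j => ∑ k, α k * g4br i j k

lemma gram_eq (α : Fin 7 → ℝ) : gramG4 α =
    !![0, α 3, α 4, 0, 0, -α 0, 0;
      -α 3, 0, 0, 0, 0, 0, -α 1;
      -α 4, 0, 0, 0, 0, 0, 0;
      0, 0, 0, 0, 0, -α 3, -α 3;
      0, 0, 0, 0, 0, -α 4, 0;
      α 0, 0, 0, α 3, α 4, 0, 0;
      0, α 1, 0, α 3, 0, 0, 0] := by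
  ext i j
  fin_cases i <;> fin_cases j <;>
    simp [gramG4, g4br, g4half, Fin.sum_univ_seven, Pi.single_apply] <;> rfl

/-- A 7×7 real matrix with vanishing determinant has rank at most 6. -/
lemma rank_le_six_of_det_eq_zero (A : Matrix (Fin 7) (Fin 7) ℝ) (h : A.det = 0) :
    A.rank ≤ 6 := by
  obtain ⟨v, hv0, hAv⟩ := Matrix.exists_mulVec_eq_zero_iff.mpr h
  have hmem : v ∈ LinearMap.ker A.mulVecLin := by
    simpa [Matrix.mulVecLin_apply] using hAv
  have hpos : 0 < Module.finrank ℝ (LinearMap.ker A.mulVecLin) := by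
    rw [Module.finrank_pos_iff]
    exact ⟨⟨⟨v, hmem⟩, 0, by simp [Subtype.ext_iff, hv0]⟩⟩
  have hsum := LinearMap.finrank_range_add_finrank_ker A.mulVecLin
  have h7 : Module.finrank ℝ (Fin 7 → ℝ) = 7 := by simp
  rw [Matrix.rank]
  omega

/-- If some 6×6 submatrix has nonzero determinant, the rank is at least 6. -/
lemma six_le_rank (A : Matrix (Fin 7) (Fin 7) ℝ) (e f : Fin 6 → Fin 7)
    (h : (A.submatrix e f).det ≠ 0) : 6 ≤ A.rank := by
  set P : Matrix (Fin 6) (Fin 7) ℝ := Matrix.of fun i j => if j = e i then 1 else 0 with hP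
  set Q : Matrix (Fin 6) (Fin 7) ℝ := Matrix.of fun i j => if j = f i then 1 else 0 with hQ
  have hfac : A.submatrix e f = P * A * Qᵀ := by
    ext i j
    simp [Matrix.mul_apply, hP, hQ, Matrix.transpose_apply, ite_mul, mul_ite,
      Finset.sum_ite_eq, Finset.sum_ite_eq']
  have hr : (A.submatrix e f).rank = 6 := by
    rw [Matrix.rank_of_isUnit _ ((Matrix.isUnit_iff_isUnit_det _).mpr
      (isUnit_iff_ne_zero.mpr h))]
    simp
  calc (6 : ℕ) = (A.submatrix e f).rank := hr.symm
    _ ≤ A.rank := by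
        rw [hfac]
        exact (Matrix.rank_mul_le_left _ _).trans (Matrix.rank_mul_le_right _ _)

/-- If every row of `A` outside the image of `r : Fin 5 → Fin 7` vanishes,
then the rank of `A` is at most 5. -/
lemma rank_le_five_of_rows (A : Matrix (Fin 7) (Fin 7) ℝ) (r : Fin 5 → Fin 7)
    (hinj : Function.Injective r) (h : ∀ i, (∀ k, r k ≠ i) → A i = 0) :
    A.rank ≤ 5 := by
  have hfac : A = (Matrix.of fun i k => if i = r k then (1 : ℝ) else 0) *
      (Matrix.of fun k j => A (r k) j) := by
    ext i j
    rw [Matrix.mul_apply]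
    by_cases hi : ∃ k, r k = i
    · obtain ⟨k₀, hk₀⟩ := hi
      rw [Finset.sum_eq_single k₀]
      · simp [hk₀.symm]
      · intro k _ hk
        have : i ≠ r k := by
          intro hik
          exact hk (hinj (by rw [← hik, hk₀]))
        simp [this]
      · simp
    · push_neg at hi
      have hA : A i = 0 := h i hi
      have : ∀ k : Fin 5, i ≠ r k := fun k hik => hi k hik.symm
      simp [hA, this]
  rw [hfac]
  refine (Matrix.rank_mul_le_left _ _).trans ?_
  exact (Matrix.rank_le_card_width _).trans (by simp)

lemma cons_val_five' {β : Type*} (a b c d e f : β) : ![a, b, c, d, e, f] 5 = f := rfl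

set_option maxRecDepth 20000 in
/-- For `F ∈ (𝔊₄⁰⁰)*` with coordinates `(α₁,…,α₅,α,β)`, the rank of `B_F` is `6`
iff `α₅ ≠ 0` and (`α₂ ≠ 0` or `α₄ ≠ 0`); in particular the maximal rank is `6`. -/
theorem rank_BF_G400 :
    (∀ α : Fin 7 → ℝ, (gramG4 α).rank ≤ 6) ∧
    (∀ α : Fin 7 → ℝ,
      (gramG4 α).rank = 6 ↔ (α 4 ≠ 0 ∧ (α 1 ≠ 0 ∨ α 3 ≠ 0))) := by
  have key6 : ∀ α : Fin 7 → ℝ, (gramG4 α).rank ≤ 6 := by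
    intro α
    apply rank_le_six_of_det_eq_zero
    have hsk : (gramG4 α)ᵀ = -(gramG4 α) := by
      ext i j
      simp only [Matrix.transpose_apply, Matrix.neg_apply, gramG4, Matrix.of_apply, g4br,
        Pi.sub_apply, ← Finset.sum_neg_distrib]
      exact Finset.sum_congr rfl fun k _ => by ring
    have h1 : (gramG4 α).det = -(gramG4 α).det := by
      conv_lhs => rw [← Matrix.det_transpose, hsk]
      rw [Matrix.det_neg]
      norm_num
    linarith
  refine ⟨key6, fun α => ⟨?_, ?_⟩⟩
  · -- rank = 6 → conditions
    intro hrk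
    by_contra hcond
    push_neg at hcond
    have h5 : (gramG4 α).rank ≤ 5 := by
      by_cases h4 : α 4 = 0
      · refine rank_le_five_of_rows _ ![0, 1, 3, 5, 6] (by decide) ?_
        intro i hi
        fin_cases i
        · exact absurd rfl (hi 0)
        · exact absurd rfl (hi 1)
        · funext j; rw [gram_eq]; fin_cases j <;> simp [h4] <;> rfl
        · exact absurd rfl (hi 2)
        · funext j; rw [gram_eq]; fin_cases j <;> simp [h4] <;> rfl
        · exact absurd rfl (hi 3)
        · exact absurd rfl (hi 4)
      · obtain ⟨h1, h3⟩ := hcond h4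
        refine rank_le_five_of_rows _ ![0, 2, 4, 5, 6] (by decide) ?_
        intro i hi
        fin_cases i
        · exact absurd rfl (hi 0)
        · funext j; rw [gram_eq]; fin_cases j <;> simp [h1, h3] <;> rfl
        · exact absurd rfl (hi 1)
        · funext j; rw [gram_eq]; fin_cases j <;> simp [h1, h3] <;> rfl
        · exact absurd rfl (hi 2)
        · exact absurd rfl (hi 3)
        · exact absurd rfl (hi 4)
    omega
  · -- conditions → rank = 6
    rintro ⟨h4, h13⟩
    refine le_antisymm (key6 α) ?_
    rcases h13 with h1 | h3
    · refine six_le_rank _ ![1, 0, 5, 6, 4, 2] ![6, 2, 4, 1, 5, 0] ?_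
      have hsub : (gramG4 α).submatrix ![1, 0, 5, 6, 4, 2] ![6, 2, 4, 1, 5, 0] =
          !![-α 1, 0, 0, 0, 0, -α 3;
             0, α 4, 0, α 3, -α 0, 0;
             0, 0, α 4, 0, 0, α 0;
             0, 0, 0, α 1, 0, 0;
             0, 0, 0, 0, -α 4, 0;
             0, 0, 0, 0, 0, -α 4] := by
        rw [gram_eq]; ext i j; fin_cases i <;> fin_cases j <;> rfl
      have htri : Matrix.BlockTriangular ((gramG4 α).submatrix
          ![1, 0, 5, 6, 4, 2] ![6, 2, 4, 1, 5, 0]) id := by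
        rw [hsub]
        intro i j hij
        fin_cases i <;> fin_cases j <;>
          first
            | rfl
            | exact absurd hij (by decide)
      have hdet : ((gramG4 α).submatrix ![1, 0, 5, 6, 4, 2] ![6, 2, 4, 1, 5, 0]).det
          = -((α 1) ^ 2 * (α 4) ^ 4) := by
        rw [Matrix.det_of_upperTriangular htri, hsub, Fin.prod_univ_six]
        show (-α 1) * (α 4) * (α 4) * (α 1) * (-α 4) * (-α 4) = -(α 1 ^ 2 * α 4 ^ 4)
        ring
      rw [hdet, neg_ne_zero]
      exact mul_ne_zero (pow_ne_zero 2 h1) (pow_ne_zero 4 h4)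
    · refine six_le_rank _ ![0, 3, 5, 6, 4, 2] ![2, 6, 4, 3, 5, 0] ?_
      have hsub : (gramG4 α).submatrix ![0, 3, 5, 6, 4, 2] ![2, 6, 4, 3, 5, 0] =
          !![α 4, 0, 0, 0, -α 0, 0;
             0, -α 3, 0, 0, -α 3, 0;
             0, 0, α 4, α 3, 0, α 0;
             0, 0, 0, α 3, 0, 0;
             0, 0, 0, 0, -α 4, 0;
             0, 0, 0, 0, 0, -α 4] := by
        rw [gram_eq]; ext i j; fin_cases i <;> fin_cases j <;> rfl
      have htri : Matrix.BlockTriangular ((gramG4 α).submatrix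
          ![0, 3, 5, 6, 4, 2] ![2, 6, 4, 3, 5, 0]) id := by
        rw [hsub]
        intro i j hij
        fin_cases i <;> fin_cases j <;>
          first
            | rfl
            | exact absurd hij (by decide)
      have hdet : ((gramG4 α).submatrix ![0, 3, 5, 6, 4, 2] ![2, 6, 4, 3, 5, 0]).det
          = -((α 3) ^ 2 * (α 4) ^ 4) := by
        rw [Matrix.det_of_upperTriangular htri, hsub, Fin.prod_univ_six]
        show (α 4) * (-α 3) * (α 4) * (α 3) * (-α 4) * (-α 4) = -(α 3 ^ 2 * α 4 ^ 4)
        ring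
      rw [hdet, neg_ne_zero]
      exact mul_ne_zero (pow_ne_zero 2 h3) (pow_ne_zero 4 h4)
  end
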